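/- The group of totally positive units u ∈ O_F^× whose multiplication action on A_Δ = 𝔡⁻¹/O_F is trivial (i.e. (u−1)·𝔡⁻¹ ⊆ O_F) is exactly the infinite cyclic group generated by ε_Δ := (ε_F⁺)². Moreover the group {u ∈ O_F^× : Nm(u) = 1} equals {±(ε_F⁺)ⁿ : n ∈ ℤ}, and its quotient by ⟨ε_Δ⟩ is isomorphic to (ℤ/2ℤ)², generated by the classes of −1 and ε_F⁺. -/

import Mathlib

/-!
As `Δ` is a fundamental discriminant, every `x ∈ 𝓞_F` satisfies `(x - x') / √Δ ∈ ℤ`. For a unit of norm one, `u² - 1 = u (u - u')`, so `ε_Δ = (ε_F⁺)²` acts trivially on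
`𝔡⁻¹/𝓞_F`. Conversely, if `ε = ε_F⁺` acted trivially then `γ = (ε - 1)/√Δ` would be integral with
`γ = ε γ'`, and `N = γ γ'` satisfies `(γ + γ')² = N (NΔ + 4)`. As `gcd(N, NΔ + 4) ∣ 4`, `N = a²`
is a square, so `±γ/a` is a totally positive unit whose square is `ε`, contradicting that `ε`
generates the totally positive units. The remaining statements are bookkeeping in
`{±1} × εᶻ`.
-/
open NumberField
open scoped nonZeroDivisors

attribute [local instance] Classical.propDecidable

noncomputable section

/-- `d` is a fundamental discriminant (with `1` allowed, corresponding to the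
trivial discriminant): either `d ≡ 1 (mod 4)` and `d` is squarefree, or
`d = 4m` with `m` squarefree and `m ≡ 2, 3 (mod 4)`. -/
def IsFundamentalDiscriminant (d : ℤ) : Prop :=
  (d % 4 = 1 ∧ Squarefree d) ∨
  (d % 4 = 0 ∧ Squarefree (d / 4) ∧ (d / 4 % 4 = 2 ∨ d / 4 % 4 = 3))

/-- Setup: the real quadratic field `F = ℚ(√Δ) ⊂ ℝ` of fundamental discriminant
`Δ > 1`, given as an abstract number field `F` of degree `2`, together with a real
embedding `ι : F → ℝ`, the nontrivial Galois conjugation `σ : F → F` (restricting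
to `σO` on the ring of integers) and the totally positive square root `sΔ` of `Δ`
in `𝓞 F` (so that `𝔡 = (sΔ)` is the different ideal and `𝔡⁻¹ = (1/√Δ)𝓞 F`). -/
structure QS where
  F : Type
  [fld : Field F]
  [nf : NumberField F]
  Δ : ℤ
  hΔ : 1 < Δ
  hfund : IsFundamentalDiscriminant Δ
  hdeg : Module.finrank ℚ F = 2
  ι : F →+* ℝ
  σ : F ≃+* F
  hσ : ∀ x, σ (σ x) = x
  hσne : σ ≠ RingEquiv.refl F
  sΔ : 𝓞 F
  hsΔ : (algebraMap (𝓞 F) F sΔ) * (algebraMap (𝓞 F) F sΔ) = (Δ : F)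
  hsΔpos : 0 < ι (algebraMap (𝓞 F) F sΔ)
  hsΔσ : σ (algebraMap (𝓞 F) F sΔ) = - algebraMap (𝓞 F) F sΔ
  σO : 𝓞 F →+* 𝓞 F
  hσO : ∀ x : 𝓞 F, algebraMap (𝓞 F) F (σO x) = σ (algebraMap (𝓞 F) F x)

attribute [instance] QS.fld QS.nf

/-- The inclusion `𝓞 F → F`. -/
def QS.toF (S : QS) (x : 𝓞 S.F) : S.F := algebraMap (𝓞 S.F) S.F x

/-- `√Δ` as an element of `F`. -/
def QS.sqrtΔ (S : QS) : S.F := S.toF S.sΔ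

/-- `x ∈ F` is totally positive. -/
def QS.Pos (S : QS) (x : S.F) : Prop := 0 < S.ι x ∧ 0 < S.ι (S.σ x)

/-- `x ∈ F` is an algebraic integer, i.e. lies in `𝓞 F`. -/
def QS.isInt (S : QS) (x : S.F) : Prop := ∃ a : 𝓞 S.F, S.toF a = x

/-- `x ∈ 𝔡⁻¹ = (1/√Δ)𝓞 F`. -/
def QS.inDual (S : QS) (x : S.F) : Prop := S.isInt (S.sqrtΔ * x)

/-- The norm `Nm(x) = x x'`, computed in `ℝ` via the embedding `ι`. -/
def QS.NmR (S : QS) (x : S.F) : ℝ := S.ι x * S.ι (S.σ x)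

/-- The trace `Tr(x) = x + x'`, computed in `ℝ` via the embedding `ι`. -/
def QS.TrR (S : QS) (x : S.F) : ℝ := S.ι x + S.ι (S.σ x)

/-- The different ideal `𝔡 = (√Δ)` of `𝓞 F`. -/
def QS.dIdeal (S : QS) : Ideal (𝓞 S.F) := Ideal.span {S.sΔ}

/-- The sign of `x ∈ F` (under the fixed real embedding). -/
def QS.sgn (S : QS) (x : S.F) : ℤ := if 0 < S.ι x then 1 else -1

/-- `r(x) = |x/x'|`. -/
def QS.rQ (S : QS) (x : S.F) : ℝ := |S.ι x / S.ι (S.σ x)|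

/-- `P` is the unique prime ideal of `𝓞 F` above the rational prime `p`. -/
def QS.uniquePrimeAbove (S : QS) (p : ℕ) (P : Ideal (𝓞 S.F)) : Prop :=
  P.IsPrime ∧ P ≠ ⊥ ∧ P ≠ ⊤ ∧ (p : 𝓞 S.F) ∈ P ∧
    ∀ Q : Ideal (𝓞 S.F), Q.IsPrime → Q ≠ ⊥ → Q ≠ ⊤ → (p : 𝓞 S.F) ∈ Q → Q = P

/-- The set `Nm⁻(𝔟) = 𝔟/𝔟'` of `x ∈ F` with `x·𝔟' ⊆ 𝔟` (for invertible `𝔟`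
this is exactly the fractional ideal `𝔟 (𝔟')⁻¹`). -/
def QS.nmMinus (S : QS) (b : Ideal (𝓞 S.F)) : Set S.F :=
  {x | ∀ y ∈ b, ∃ c ∈ b, S.toF c = x * S.toF (S.σO y)}

/-- The set `Nm⁻(𝔟)𝔡⁻¹ = 𝔟 (𝔟')⁻¹ 𝔡⁻¹`, i.e. those `x ∈ F` with `x √Δ 𝔟' ⊆ 𝔟`. -/
def QS.nmMinusDual (S : QS) (b : Ideal (𝓞 S.F)) : Set S.F :=
  {x | ∀ y ∈ b, ∃ c ∈ b, S.toF c = x * S.sqrtΔ * S.toF (S.σO y)}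

/-- `x ≡ h` in `A_Δ = Nm⁻(𝔟)𝔡⁻¹ / Nm⁻(𝔟)` under the canonical identification
with `𝔡⁻¹/𝓞 F`: the difference decomposes as an element of `Nm⁻(𝔟)` plus an
algebraic integer. -/
def QS.congMod (S : QS) (b : Ideal (𝓞 S.F)) (x h : S.F) : Prop :=
  ∃ a ∈ S.nmMinus b, ∃ r : 𝓞 S.F, x - h = a + S.toF r

/-- The lattice point set `{λ ∈ Nm⁻(𝔟)𝔡⁻¹ : λ ≡ h in A_Δ, Nm(λ) = m}`. -/
def QS.latticeSet (S : QS) (b : Ideal (𝓞 S.F)) (m : ℝ) (h : S.F) : Set S.F :=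
  {x | x ∈ S.nmMinusDual b ∧ S.congMod b x h ∧ S.NmR x = m}

/-- Fundamental domain `1 ≤ |x/x'| < e²` for the action of `Γ_Δ = ⟨ε_Δ⟩`
(where `e = ε_Δ`), intersected with a set `T`. -/
def QS.fdSet (S : QS) (e : ℝ) (T : Set S.F) : Set S.F :=
  {x ∈ T | 1 ≤ S.rQ x ∧ S.rQ x < e ^ 2}

/-- `c_𝔞(m, h) = Σ_Λ sgn(Λ)`, summed over the (finitely many) `Γ_Δ`-orbits of
`{λ ∈ Nm⁻(𝔟)𝔡⁻¹ : λ ≡ h, Nm(λ) = m}`, each orbit represented by its element in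
the fundamental domain `1 ≤ |λ/λ'| < ε_Δ²`.  Here `e = ε_Δ`. -/
def QS.cIdeal (S : QS) (e : ℝ) (b : Ideal (𝓞 S.F)) (m : ℝ) (h : S.F) : ℤ :=
  ∑ᶠ x ∈ S.fdSet e (S.latticeSet b m h), S.sgn x

/-- `a(Λ)` for an orbit with representative `x` in the fundamental domain:
`sgn(x) log|x/x'|` if `|x/x'| ≠ 1`, and `−log ε_Δ` otherwise (`e = ε_Δ`). -/
def QS.aVal (S : QS) (e : ℝ) (x : S.F) : ℝ :=
  if S.rQ x ≠ 1 then (S.sgn x : ℝ) * Real.log (S.rQ x) else - Real.log e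

/-- `tc_𝔞(m, h) = Σ_Λ a(Λ)` over the `Γ_Δ`-orbits as in `QS.cIdeal`. -/
def QS.tcIdeal (S : QS) (e : ℝ) (b : Ideal (𝓞 S.F)) (m : ℝ) (h : S.F) : ℝ :=
  ∑ᶠ x ∈ S.fdSet e (S.latticeSet b m h), S.aVal e x

/-- Two integral ideals are narrowly equivalent (same class in `Cl⁺(F)`). -/
def QS.narrowEq (S : QS) (a b : Ideal (𝓞 S.F)) : Prop :=
  ∃ α β : 𝓞 S.F, S.Pos (S.toF α) ∧ S.Pos (S.toF β) ∧
    Ideal.span {α} * a = Ideal.span {β} * b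

/-- `SF` is a set of integral ideals coprime to `𝔡` representing the classes of
the narrow class group `Cl⁺(F)` exactly once. -/
def QS.IsRepSet (S : QS) (SF : Finset (Ideal (𝓞 S.F))) : Prop :=
  (∀ b ∈ SF, b ≠ ⊥ ∧ IsCoprime b S.dIdeal) ∧
  ∀ a : Ideal (𝓞 S.F), a ≠ ⊥ → ∃! b, b ∈ SF ∧ S.narrowEq a b

/-- `χ` is a genus character of `F`: a `{±1}`-valued, multiplicative function on
integral ideals, invariant under narrow equivalence, of the form `χ_{Δ₁,Δ₂}`
for a factorization `Δ = Δ₁Δ₂` into coprime fundamental discriminants, i.e.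
taking the value `(Δ₁/p)` (Legendre symbol) on degree-one primes `𝔭 ∤ Δ`. -/
def QS.IsGenusChar (S : QS) (χ : Ideal (𝓞 S.F) → ℤ) : Prop :=
  (∀ a b : Ideal (𝓞 S.F), a ≠ ⊥ → b ≠ ⊥ → χ (a * b) = χ a * χ b) ∧
  (∀ a : Ideal (𝓞 S.F), a ≠ ⊥ → χ a = 1 ∨ χ a = -1) ∧
  (∀ a b : Ideal (𝓞 S.F), a ≠ ⊥ → b ≠ ⊥ → S.narrowEq a b → χ a = χ b) ∧
  (∃ Δ₁ Δ₂ : ℤ, S.Δ = Δ₁ * Δ₂ ∧ IsCoprime Δ₁ Δ₂ ∧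
    IsFundamentalDiscriminant Δ₁ ∧ IsFundamentalDiscriminant Δ₂ ∧
    ∀ (p : ℕ) (hp : p.Prime), p ≠ 2 → ¬ ((p : ℤ) ∣ S.Δ) →
      ∀ P : Ideal (𝓞 S.F), Ideal.absNorm P = p → χ P = @legendreSym p ⟨hp⟩ Δ₁)

/-- `χ` is an odd genus character: `χ([𝔡]) = −1`. -/
def QS.IsOddGenusChar (S : QS) (χ : Ideal (𝓞 S.F) → ℤ) : Prop :=
  S.IsGenusChar χ ∧ χ S.dIdeal = -1

/-- `c_χ(m, h) = Σ_{[𝔟] ∈ Cl⁺(F)} χ([𝔟]) Σ_Λ sgn(Λ)`, the sum over narrow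
classes realized by summing over the representative set `SF`; here `λ` runs over
`Γ_Δ`-orbits of `{λ ∈ Nm⁻(𝔟)𝔡⁻¹ : λ ≡ h, Nm(λ) = −m}` (`e = ε_Δ`). -/
def QS.cChi (S : QS) (e : ℝ) (SF : Finset (Ideal (𝓞 S.F)))
    (χ : Ideal (𝓞 S.F) → ℤ) (m : ℝ) (h : S.F) : ℤ :=
  ∑ b ∈ SF, χ b * S.cIdeal e b (-m) h

/-- `tc_χ(m, h) = (1/2) Σ_{𝔟 ∈ S_F} χ([𝔟]) tc_{Nm⁻(𝔟)}(m, h)`. -/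
def QS.tcChi (S : QS) (e : ℝ) (SF : Finset (Ideal (𝓞 S.F)))
    (χ : Ideal (𝓞 S.F) → ℤ) (m : ℝ) (h : S.F) : ℝ :=
  (1 / 2) * ∑ b ∈ SF, (χ b : ℝ) * S.tcIdeal e b m h

/-- `s_h = #{s ∈ {1, ε_F⁺} : s h = h} − #{s ∈ {−1, −ε_F⁺} : s h = h}` in
`A_Δ = 𝔡⁻¹/𝓞 F`. -/
def QS.shVal (S : QS) (εp : (𝓞 S.F)ˣ) (h : S.F) : ℤ :=
  ((if S.isInt ((1 : S.F) * h - h) then 1 else 0)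
      + (if S.isInt (S.toF ↑εp * h - h) then 1 else 0))
    - ((if S.isInt ((-1 : S.F) * h - h) then 1 else 0)
      + (if S.isInt ((-(S.toF ↑εp)) * h - h) then 1 else 0))

/-- `χ(sqrt(𝔞, h))`: the sum of `χ([𝔟])` over those classes `[𝔟] ∈ Cl⁺(F)`
(represented by `SF`) for which `𝔞 = Nm⁻(𝔟)(μ)` for some `μ > 0` with
`μ/√Δ ∈ 𝔡⁻¹` representing `h ∈ A_Δ`. -/
def QS.chiSqrt (S : QS) (SF : Finset (Ideal (𝓞 S.F))) (χ : Ideal (𝓞 S.F) → ℤ)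
    (a : Ideal (𝓞 S.F)) (h : S.F) : ℤ :=
  ∑ b ∈ SF, χ b *
    (if ∃ μ : S.F, 0 < S.ι μ ∧ S.isInt μ ∧ S.isInt (μ / S.sqrtΔ - h) ∧
        {z : S.F | ∃ c ∈ a, S.toF c = z} = {z : S.F | ∃ y ∈ S.nmMinus b, z = μ * y}
      then 1 else 0)

/-- `σ_χ(𝔞) = Σ_{𝔟 ⊇ 𝔞} χ([𝔟])`, the divisor sum of `χ`. -/
def QS.sigmaChi (S : QS) (χ : Ideal (𝓞 S.F) → ℤ) (a : Ideal (𝓞 S.F)) : ℤ :=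
  ∑ᶠ b ∈ {b : Ideal (𝓞 S.F) | a ≤ b}, χ b

/-- `ord_𝔩(J)`, the exponent of the prime `𝔩` in the nonzero integral ideal `J`. -/
def QS.ordI (S : QS) (l J : Ideal (𝓞 S.F)) : ℕ := sSup {k : ℕ | J ≤ l ^ k}

lemma Int.sq_emod_four (x : ℤ) : x ^ 2 % 4 = 0 ∨ x ^ 2 % 4 = 1 := by
  obtain ⟨c, rfl | rfl⟩ := Int.even_or_odd' x <;> ring_nf <;> omega

lemma Int.exists_sq_mul_gcd_of_mul_eq_sq {x y g : ℤ} (hx : 0 < x) (hy : 0 < y)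
    (h : x * y = g ^ 2) : ∃ a b : ℤ, x = a ^ 2 * x.gcd y ∧ y = b ^ 2 * x.gcd y := by
  obtain ⟨x', y', hxy', hx', hy'⟩ := Int.exists_gcd_one (Int.gcd_pos_of_ne_zero_left y hx.ne')
  set d : ℤ := (x.gcd y : ℤ)
  have hd : 0 < d := by positivity
  obtain ⟨c, rfl⟩ : d ∣ g := by
    rw [← Int.pow_dvd_pow_iff two_ne_zero, ← h, hx', hy']
    exact ⟨x' * y', by ring⟩
  have hc : x' * y' = c ^ 2 := by
    have : (x' * y') * d ^ 2 = c ^ 2 * d ^ 2 := by rw [← mul_pow, mul_comm c, ← h, hx', hy']; ring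
    exact mul_right_cancel₀ (by positivity) this
  have hsq : ∀ {z w : ℤ}, Int.gcd z w = 1 → z * w = c ^ 2 → 0 < z * d → ∃ a, z = a ^ 2 := by
    intro z w hzw hzwc hz
    obtain ⟨a, ha | ha⟩ := Int.sq_of_gcd_eq_one hzw hzwc
    · exact ⟨a, ha⟩
    · nlinarith [sq_nonneg a]
  obtain ⟨a, ha⟩ := hsq hxy' hc (hx' ▸ hx)
  obtain ⟨b, hb⟩ := hsq (Int.gcd_comm x' y' ▸ hxy') (by rw [mul_comm, hc]) (hy' ▸ hy)
  exact ⟨a, b, by rw [hx', ha], by rw [hy', hb]⟩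

lemma Int.isSquare_of_sq_eq_mul_mul_add_four {Δ N g : ℤ} (hΔ4 : Δ % 4 = 0 ∨ Δ % 4 = 1)
    (hΔ : 0 ≤ Δ) (hN : 0 < N) (h : g ^ 2 = N * (N * Δ + 4)) : IsSquare N := by
  obtain ⟨a, b, ha, hb⟩ := Int.exists_sq_mul_gcd_of_mul_eq_sq hN (by positivity) h.symm
  set d := N.gcd (N * Δ + 4)
  have hd4 : d ∣ 4 := by
    have := dvd_sub (Int.gcd_dvd_right N (N * Δ + 4)) ((Int.gcd_dvd_left N _).mul_left Δ)
    rw [show N * Δ + 4 - Δ * N = 4 by ring] at this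
    exact_mod_cast this
  have hd : d = 1 ∨ d = 2 ∨ d = 4 := by
    have := Nat.le_of_dvd (by norm_num) hd4
    interval_cases d <;> simp_all
  rcases hd with hd | hd | hd <;> rw [hd] at ha hb
  · exact ⟨a, by rw [ha]; ring⟩
  · -- `b² = a²Δ + 2` is impossible modulo 4
    rw [ha] at hb
    have hb' : b ^ 2 = a ^ 2 * Δ + 2 := by push_cast at hb; linarith
    have hprod : a ^ 2 * Δ % 4 = (a ^ 2 % 4) * (Δ % 4) % 4 := Int.mul_emod _ _ _
    have := Int.sq_emod_four a
    have := Int.sq_emod_four b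
    rcases hΔ4 with h4 | h4 <;> rw [h4] at hprod <;> omega
  · exact ⟨2 * a, by rw [ha]; push_cast; ring⟩

lemma IsFundamentalDiscriminant.dvd_of_sq_mul_eq {Δ t k n : ℤ} (hf : IsFundamentalDiscriminant Δ)
    (h : t ^ 2 * Δ = k ^ 2 + 4 * n * Δ) : Δ ∣ k := by
  rcases hf with ⟨-, hsq⟩ | ⟨h4, hsq, hm⟩
  · exact (hsq.dvd_pow_iff_dvd two_ne_zero).mp ⟨t ^ 2 - 4 * n, by linarith⟩
  · set m := Δ / 4
    have hΔ : Δ = 4 * m := by omega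
    rw [hΔ] at h ⊢
    obtain ⟨κ, rfl⟩ : (2 : ℤ) ∣ k :=
      Int.prime_two.dvd_of_dvd_pow (n := 2) ⟨2 * (m * t ^ 2 - 4 * n * m), by linarith⟩
    obtain ⟨j, rfl⟩ : m ∣ κ :=
      (hsq.dvd_pow_iff_dvd two_ne_zero).mp ⟨t ^ 2 - 4 * n, by linarith⟩
    have ht : t ^ 2 = m * j ^ 2 + 4 * n := by
      have := hsq.ne_zero
      apply mul_left_cancel₀ this; linarith
    -- for odd `j` this would make `m ≡ t² ≡ 0, 1 (mod 4)`
    obtain ⟨i, rfl⟩ : Even j := by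
      by_contra hj
      obtain ⟨i, rfl⟩ := Int.not_even_iff_odd.mp hj
      have := Int.sq_emod_four t
      have : m * (2 * i + 1) ^ 2 = 4 * (m * (i ^ 2 + i)) + m := by ring
      omega
    exact ⟨i, by ring⟩

lemma pow_mul_sq_zpow {G : Type*} [Group G] (g : G) (b : ℕ) (n : ℤ) :
    g ^ b * (g ^ 2) ^ n = g ^ ((b : ℤ) + 2 * n) := by
  rw [zpow_add, zpow_natCast, zpow_mul, zpow_ofNat]

lemma exists_fin_two_zpow_eq {G : Type*} [Group G] (g : G) (k : ℤ) :
    ∃ (b : Fin 2) (n : ℤ), g ^ k = g ^ (b : ℕ) * (g ^ 2) ^ n := by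
  obtain ⟨n, rfl | rfl⟩ := Int.even_or_odd' k
  · exact ⟨0, n, by rw [pow_mul_sq_zpow]; simp⟩
  · exact ⟨1, n, by rw [pow_mul_sq_zpow]; simp [add_comm]⟩

lemma eq_and_eq_of_neg_one_pow_mul_zpow_eq {x : ℝ} (hx : 1 < x) {a a' : Fin 2} {k k' : ℤ}
    (h : (-1) ^ (a : ℕ) * x ^ k = (-1) ^ (a' : ℕ) * x ^ k') : a = a' ∧ k = k' := by
  have hpos : ∀ m : ℤ, 0 < x ^ m := fun m => zpow_pos (by linarith) m
  fin_cases a <;> fin_cases a' <;> simp only [pow_zero, pow_one, one_mul,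
    neg_one_mul] at h
  · exact ⟨rfl, zpow_right_injective₀ (by linarith) hx.ne' h⟩
  · linarith [hpos k, hpos k']
  · linarith [hpos k, hpos k']
  · exact ⟨rfl, zpow_right_injective₀ (by linarith) hx.ne' (neg_inj.1 h)⟩

namespace QS

section Basic

variable (S : QS)

@[simp] lemma toF_one : S.toF 1 = 1 := map_one _

@[simp] lemma toF_neg (a : 𝓞 S.F) : S.toF (-a) = -S.toF a := map_neg _ _

@[simp] lemma toF_mul (a b : 𝓞 S.F) : S.toF (a * b) = S.toF a * S.toF b := map_mul _ _ _

@[simp] lemma toF_pow (a : 𝓞 S.F) (n : ℕ) : S.toF (a ^ n) = S.toF a ^ n := map_pow _ _ _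

@[simp] lemma toF_zpow (u : (𝓞 S.F)ˣ) (n : ℤ) : S.toF ↑(u ^ n) = S.toF ↑u ^ n := by
  have h := congrArg Units.val (map_zpow (Units.map (algebraMap (𝓞 S.F) S.F).toMonoidHom) u n)
  rwa [Units.val_zpow_eq_zpow_val, Units.coe_map, Units.coe_map] at h

lemma isIntegral_toF (a : 𝓞 S.F) : IsIntegral ℤ (S.toF a) := a.isIntegral_coe

lemma sqrtΔ_mul_self : S.sqrtΔ * S.sqrtΔ = S.Δ := S.hsΔ

lemma sigma_sqrtΔ : S.σ S.sqrtΔ = -S.sqrtΔ := S.hsΔσ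

lemma sqrtΔ_ne_zero : S.sqrtΔ ≠ 0 := by
  intro h
  have := S.sqrtΔ_mul_self
  rw [h, zero_mul, eq_comm, Int.cast_eq_zero] at this
  exact absurd this (by linarith [S.hΔ])

lemma isIntegral_sqrtΔ : IsIntegral ℤ S.sqrtΔ := S.isIntegral_toF S.sΔ

end Basic

variable {S : QS}

lemma isInt_iff {x : S.F} : S.isInt x ↔ IsIntegral ℤ x :=
  ⟨fun ⟨a, ha⟩ => ha ▸ a.isIntegral_coe, fun hx => ⟨⟨x, hx⟩, rfl⟩⟩

lemma isIntegral_sigma {x : S.F} (hx : IsIntegral ℤ x) : IsIntegral ℤ (S.σ x) :=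
  hx.map S.σ.toRingHom.toIntAlgHom

lemma exists_rat_eq_of_sigma_eq {x : S.F} (hx : S.σ x = x) : ∃ q : ℚ, x = q := by
  by_contra! hq
  have hli : LinearIndependent ℚ ![1, x] := by
    refine LinearIndependent.pair_iff.2 fun s t hst => ?_
    rcases eq_or_ne t 0 with rfl | ht
    · simpa using hst
    · refine absurd (?_ : x = ((-s / t : ℚ) : S.F)) (hq _)
      rw [Rat.smul_def, Rat.smul_def, mul_one] at hst
      push_cast
      field_simp
      linear_combination hst
  have hspan : Submodule.span ℚ {1, x} = ⊤ := by
    simpa [Matrix.range_cons, Set.pair_comm] using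
      hli.span_eq_top_of_card_eq_finrank (by simp [S.hdeg])
  obtain ⟨a, b, hab⟩ := Submodule.mem_span_pair.1 (hspan ▸ Submodule.mem_top : S.sqrtΔ ∈ _)
  -- `σ` fixes `span {1, x}` pointwise but negates `√Δ`
  have := congrArg S.σ hab
  rw [map_add, map_rat_smul, map_rat_smul, map_one, hx, hab, S.sigma_sqrtΔ] at this
  exact S.sqrtΔ_ne_zero (by linear_combination this / 2)

lemma exists_int_eq_of_sigma_eq {x : S.F} (hint : IsIntegral ℤ x) (hx : S.σ x = x) :
    ∃ k : ℤ, x = k := by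
  obtain ⟨q, rfl⟩ := exists_rat_eq_of_sigma_eq hx
  obtain ⟨k, hk⟩ := IsIntegrallyClosed.isIntegral_iff.mp (by simpa using hint : IsIntegral ℤ q)
  exact ⟨k, by rw [← hk]; simp⟩

lemma exists_int_eq_add_sigma {x : S.F} (hx : IsIntegral ℤ x) : ∃ t : ℤ, x + S.σ x = t :=
  exists_int_eq_of_sigma_eq (hx.add (isIntegral_sigma hx)) (by rw [map_add, S.hσ, add_comm])

lemma exists_int_eq_mul_sigma {x : S.F} (hx : IsIntegral ℤ x) : ∃ n : ℤ, x * S.σ x = n :=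
  exists_int_eq_of_sigma_eq (hx.mul (isIntegral_sigma hx)) (by rw [map_mul, S.hσ, mul_comm])

lemma exists_int_eq_sub_sigma_div_sqrtΔ {x : S.F} (hx : IsIntegral ℤ x) :
    ∃ j : ℤ, (x - S.σ x) / S.sqrtΔ = j := by
  obtain ⟨t, ht⟩ := exists_int_eq_add_sigma hx
  obtain ⟨n, hn⟩ := exists_int_eq_mul_sigma hx
  obtain ⟨k, hk⟩ := exists_int_eq_of_sigma_eq (x := (x - S.σ x) * S.sqrtΔ)
    ((hx.sub (isIntegral_sigma hx)).mul S.isIntegral_sqrtΔ)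
    (by rw [map_mul, map_sub, S.hσ, S.sigma_sqrtΔ]; ring)
  have hF : ((t ^ 2 * S.Δ : ℤ) : S.F) = ((k ^ 2 + 4 * n * S.Δ : ℤ) : S.F) := by
    push_cast
    rw [← ht, ← hk, ← hn, ← S.sqrtΔ_mul_self]
    ring
  obtain ⟨j, rfl⟩ := S.hfund.dvd_of_sq_mul_eq (Int.cast_injective hF)
  refine ⟨j, (div_eq_iff S.sqrtΔ_ne_zero).2 (mul_right_cancel₀ S.sqrtΔ_ne_zero ?_)⟩
  rw [hk, mul_assoc, S.sqrtΔ_mul_self]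
  push_cast
  ring

lemma mul_sigma_eq_one_or_neg_one (u : (𝓞 S.F)ˣ) :
    S.toF u * S.σ (S.toF u) = 1 ∨ S.toF u * S.σ (S.toF u) = -1 := by
  obtain ⟨n, hn⟩ := exists_int_eq_mul_sigma (S.isIntegral_toF u)
  obtain ⟨n', hn'⟩ := exists_int_eq_mul_sigma (S.isIntegral_toF ↑u⁻¹)
  have hinv : S.toF ↑u⁻¹ * S.toF u = 1 := by simp [toF]
  have hnn' : ((n * n' : ℤ) : S.F) = 1 := by
    rw [Int.cast_mul, ← hn, ← hn']
    calc _ = (S.toF ↑u⁻¹ * S.toF u) * S.σ (S.toF ↑u⁻¹ * S.toF u) := by rw [map_mul]; ring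
      _ = 1 := by rw [hinv, map_one, one_mul]
  rw [hn]
  exact_mod_cast Int.eq_one_or_neg_one_of_mul_eq_one (by exact_mod_cast hnn')

lemma mul_sigma_eq_one_of_pos {u : (𝓞 S.F)ˣ} (hu : S.Pos (S.toF u)) :
    S.toF u * S.σ (S.toF u) = 1 :=
  (mul_sigma_eq_one_or_neg_one u).resolve_right fun h => by
    have := congrArg S.ι h
    rw [map_mul, map_neg, map_one] at this
    linarith [mul_pos hu.1 hu.2]

lemma NmR_eq_one_iff {x : S.F} : S.NmR x = 1 ↔ x * S.σ x = 1 := by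
  rw [NmR, ← map_mul, ← map_one S.ι, S.ι.injective.eq_iff]

lemma NmR_neg (x : S.F) : S.NmR (-x) = S.NmR x := by
  simp only [NmR, map_neg, neg_mul_neg]

lemma NmR_zpow (x : S.F) (n : ℤ) : S.NmR (x ^ n) = S.NmR x ^ n := by
  simp only [NmR, map_zpow₀, mul_zpow]

lemma Pos.zpow {x : S.F} (hx : S.Pos x) (n : ℤ) : S.Pos (x ^ n) := by
  simp only [Pos, map_zpow₀]
  exact ⟨zpow_pos hx.1 n, zpow_pos hx.2 n⟩

lemma pos_or_pos_neg_of_NmR_pos {x : S.F} (h : 0 < S.NmR x) : S.Pos x ∨ S.Pos (-x) := by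
  simp only [Pos, NmR, map_neg, neg_pos] at h ⊢
  exact pos_and_pos_or_neg_and_neg_of_mul_pos h

lemma exists_unit_of_mul_sigma_eq_one {v : S.F} (hv : IsIntegral ℤ v) (h : v * S.σ v = 1) :
    ∃ w : (𝓞 S.F)ˣ, S.toF w = v :=
  ⟨Units.mkOfMulEqOne ⟨v, hv⟩ ⟨S.σ v, isIntegral_sigma hv⟩ (RingOfIntegers.ext h), rfl⟩

lemma forall_inDual_isInt_iff (u : S.F) :
    (∀ x, S.inDual x → S.isInt ((u - 1) * x)) ↔ IsIntegral ℤ ((u - 1) / S.sqrtΔ) := by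
  simp only [inDual, isInt_iff]
  refine ⟨fun h => ?_, fun h x hx => ?_⟩
  · simpa [div_eq_mul_inv, S.sqrtΔ_ne_zero] using
      h S.sqrtΔ⁻¹ (by simpa [S.sqrtΔ_ne_zero] using isIntegral_one)
  · have hsplit : (u - 1) * x = (u - 1) / S.sqrtΔ * (S.sqrtΔ * x) := by
      field_simp [S.sqrtΔ_ne_zero]
    exact hsplit ▸ h.mul hx

variable (S) in
def actionKernel : Subgroup (𝓞 S.F)ˣ where
  carrier := {u | ∀ x, S.inDual x → S.isInt ((S.toF ↑u - 1) * x)}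
  one_mem' := by simp [forall_inDual_isInt_iff, toF, isIntegral_zero]
  mul_mem' {u v} hu hv := by
    have hu := (forall_inDual_isInt_iff _).1 hu
    have hv := (forall_inDual_isInt_iff _).1 hv
    refine (forall_inDual_isInt_iff _).2 ?_
    have hsplit : (S.toF ↑(u * v) - 1) / S.sqrtΔ
        = S.toF u * ((S.toF v - 1) / S.sqrtΔ) + (S.toF u - 1) / S.sqrtΔ := by
      simp only [toF, Units.val_mul, map_mul]
      ring
    exact hsplit ▸ ((S.isIntegral_toF u).mul hv).add hu
  inv_mem' {u} hu := by
    have hu := (forall_inDual_isInt_iff _).1 hu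
    refine (forall_inDual_isInt_iff _).2 ?_
    have hinv : S.toF ↑u⁻¹ * S.toF u = 1 := by simp [toF]
    have hsplit : (S.toF ↑u⁻¹ - 1) / S.sqrtΔ = -(S.toF ↑u⁻¹ * ((S.toF u - 1) / S.sqrtΔ)) := by
      linear_combination hinv / S.sqrtΔ
    exact hsplit ▸ ((S.isIntegral_toF ↑u⁻¹).mul hu).neg

lemma mem_actionKernel_iff {u : (𝓞 S.F)ˣ} :
    u ∈ S.actionKernel ↔ IsIntegral ℤ ((S.toF u - 1) / S.sqrtΔ) :=
  forall_inDual_isInt_iff _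

lemma sq_mem_actionKernel {u : (𝓞 S.F)ˣ} (hu : S.toF u * S.σ (S.toF u) = 1) :
    u ^ 2 ∈ S.actionKernel := by
  obtain ⟨j, hj⟩ := exists_int_eq_sub_sigma_div_sqrtΔ (S.isIntegral_toF u)
  have hsplit : (S.toF ↑(u ^ 2) - 1) / S.sqrtΔ
      = S.toF u * ((S.toF u - S.σ (S.toF u)) / S.sqrtΔ) := by
    simp only [toF, Units.val_pow_eq_pow_val, map_pow] at hu ⊢
    linear_combination hu / S.sqrtΔ
  rw [mem_actionKernel_iff, hsplit, hj]
  exact (S.isIntegral_toF u).mul (isIntegral_intCast j)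

lemma sub_one_div_sqrtΔ_eq_mul_sigma {u : S.F} (hu : u * S.σ u = 1) :
    (u - 1) / S.sqrtΔ = u * S.σ ((u - 1) / S.sqrtΔ) := by
  rw [map_div₀, map_sub, map_one, S.sigma_sqrtΔ]
  field_simp [S.sqrtΔ_ne_zero]
  linear_combination hu

lemma exists_int_sq_eq_mul_sigma_sub_one_div {u : S.F} (hu : u * S.σ u = 1)
    (hu1 : 1 < S.ι u) (hγ : IsIntegral ℤ ((u - 1) / S.sqrtΔ)) :
    ∃ a : ℤ, a ≠ 0 ∧ (u - 1) / S.sqrtΔ * S.σ ((u - 1) / S.sqrtΔ) = a ^ 2 := by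
  set γ := (u - 1) / S.sqrtΔ
  set s := S.sqrtΔ
  have hs := S.sqrtΔ_mul_self
  have hγs : γ * s = u - 1 := div_mul_cancel₀ _ S.sqrtΔ_ne_zero
  have hσγs : S.σ γ * s = 1 - S.σ u := by
    have := congrArg S.σ hγs
    rw [map_mul, map_sub, map_one, S.sigma_sqrtΔ] at this
    linear_combination -this
  obtain ⟨N, hN⟩ := exists_int_eq_mul_sigma hγ
  obtain ⟨g, hg⟩ := exists_int_eq_add_sigma hγ
  have hNΔ : (N : S.F) * S.Δ = u + S.σ u - 2 := by
    rw [← hN, ← hs]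
    linear_combination S.σ γ * s * hγs + (u - 1) * hσγs - hu
  have hgs : (g : S.F) * s = u - S.σ u := by
    rw [← hg]
    linear_combination hγs + hσγs
  have hg2 : g ^ 2 = N * (N * S.Δ + 4) := by
    refine mul_right_cancel₀ (by linarith [S.hΔ] : S.Δ ≠ 0) (Int.cast_injective (α := S.F) ?_)
    push_cast
    linear_combination (g * s + u - S.σ u) * hgs - g ^ 2 * hs
      - (N * S.Δ + u + S.σ u + 2) * hNΔ - 4 * hu
  -- under `ι`, `NΔ = u + u⁻¹ - 2 > 0` as `u > 1`
  have hNpos : 0 < N := by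
    have hι := congrArg S.ι hNΔ
    have hισ : S.ι u * S.ι (S.σ u) = 1 := by rw [← map_mul, hu, map_one]
    simp only [map_mul, map_sub, map_add, map_intCast, map_ofNat] at hι
    have : (0 : ℝ) < N * S.Δ := by nlinarith
    have : (0 : ℝ) < N := pos_of_mul_pos_left this (by exact_mod_cast (by linarith [S.hΔ]))
    exact_mod_cast this
  have hΔ4 : S.Δ % 4 = 0 ∨ S.Δ % 4 = 1 := by
    rcases S.hfund with ⟨h, -⟩ | ⟨h, -⟩ <;> omega
  obtain ⟨a, rfl⟩ := Int.isSquare_of_sq_eq_mul_mul_add_four hΔ4 (by linarith [S.hΔ]) hNpos hg2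
  exact ⟨a, by rintro rfl; simp at hNpos, by rw [hN]; push_cast; ring⟩

lemma exists_sq_eq_of_isIntegral_sub_one_div {u : S.F} (hu : u * S.σ u = 1)
    (hu1 : 1 < S.ι u) (hγ : IsIntegral ℤ ((u - 1) / S.sqrtΔ)) :
    ∃ v : S.F, IsIntegral ℤ v ∧ v * S.σ v = 1 ∧ v ^ 2 = u := by
  obtain ⟨a, ha0, ha⟩ := exists_int_sq_eq_mul_sigma_sub_one_div hu hu1 hγ
  have hγu := sub_one_div_sqrtΔ_eq_mul_sigma hu
  set γ := (u - 1) / S.sqrtΔ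
  have ha' : (a : S.F) ^ 2 ≠ 0 := pow_ne_zero 2 (Int.cast_ne_zero.2 ha0)
  have hv2 : (γ / a) ^ 2 = u := by
    rw [div_pow, div_eq_iff ha', ← ha]
    linear_combination γ * hγu
  have hu_int : IsIntegral ℤ u := by
    rw [show u = γ * S.sqrtΔ + 1 by rw [div_mul_cancel₀ _ S.sqrtΔ_ne_zero]; ring]
    exact (hγ.mul S.isIntegral_sqrtΔ).add isIntegral_one
  refine ⟨γ / a, .of_pow two_pos (hv2 ▸ hu_int), ?_, hv2⟩
  rw [map_div₀, map_intCast, div_mul_div_comm, ← sq, div_eq_one_iff_eq ha', ha]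

lemma zpow_injective_of_one_lt {u : (𝓞 S.F)ˣ} (hu : 1 < S.ι (S.toF u)) :
    Function.Injective (u ^ · : ℤ → (𝓞 S.F)ˣ) := fun m n h =>
  zpow_right_injective₀ (by linarith) hu.ne' <| by
    simpa [toF_zpow, map_zpow₀] using congrArg (fun z : (𝓞 S.F)ˣ => S.ι (S.toF z)) h

lemma notMem_actionKernel {ε : (𝓞 S.F)ˣ} (hpos : S.Pos (S.toF ε)) (hgt : 1 < S.ι (S.toF ε))
    (hgen : ∀ u : (𝓞 S.F)ˣ, S.Pos (S.toF u) → ∃ n : ℤ, u = ε ^ n) :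
    ε ∉ S.actionKernel := by
  intro h
  obtain ⟨v, hv, hvσ, hv2⟩ :=
    exists_sq_eq_of_isIntegral_sub_one_div (mul_sigma_eq_one_of_pos hpos) hgt
      (mem_actionKernel_iff.1 h)
  obtain ⟨w, rfl⟩ := exists_unit_of_mul_sigma_eq_one hv hvσ
  have hw2 : w ^ 2 = ε := Units.ext (RingOfIntegers.ext (by simpa [toF] using hv2))
  obtain ⟨z, hz, hz2⟩ : ∃ z : (𝓞 S.F)ˣ, S.Pos (S.toF z) ∧ z ^ 2 = ε := by
    rcases pos_or_pos_neg_of_NmR_pos (NmR_eq_one_iff.2 hvσ ▸ one_pos) with hp | hp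
    · exact ⟨w, hp, hw2⟩
    · exact ⟨-w, by simpa [toF] using hp, by rw [neg_sq, hw2]⟩
  obtain ⟨n, rfl⟩ := hgen z hz
  have : n * 2 = 1 := zpow_injective_of_one_lt hgt (by simpa [zpow_mul] using hz2)
  omega

lemma NmR_eq_one_iff_exists_zpow {ε : (𝓞 S.F)ˣ} (hpos : S.Pos (S.toF ε))
    (hgen : ∀ u : (𝓞 S.F)ˣ, S.Pos (S.toF u) → ∃ n : ℤ, u = ε ^ n) (u : (𝓞 S.F)ˣ) :
    S.NmR (S.toF u) = 1 ↔ ∃ n : ℤ, u = ε ^ n ∨ u = -(ε ^ n) := by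
  refine ⟨fun hu => ?_, ?_⟩
  · rcases pos_or_pos_neg_of_NmR_pos (hu ▸ one_pos) with hp | hp
    · exact (hgen u hp).imp fun n => .inl
    · obtain ⟨n, hn⟩ := hgen (-u) (by simpa using hp)
      exact ⟨n, .inr (neg_eq_iff_eq_neg.1 hn)⟩
  · have hnorm := NmR_eq_one_iff.2 (mul_sigma_eq_one_of_pos hpos)
    rintro ⟨n, rfl | rfl⟩ <;> simp [NmR_neg, NmR_zpow, hnorm]

lemma pos_and_mem_actionKernel_iff {ε : (𝓞 S.F)ˣ} (hpos : S.Pos (S.toF ε))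
    (hgt : 1 < S.ι (S.toF ε)) (hgen : ∀ u : (𝓞 S.F)ˣ, S.Pos (S.toF u) → ∃ n : ℤ, u = ε ^ n)
    (u : (𝓞 S.F)ˣ) : S.Pos (S.toF u) ∧ u ∈ S.actionKernel ↔ ∃ n : ℤ, u = (ε ^ 2) ^ n := by
  have hsq := sq_mem_actionKernel (mul_sigma_eq_one_of_pos hpos)
  refine ⟨fun ⟨hu, hker⟩ => ?_, ?_⟩
  · obtain ⟨k, rfl⟩ := hgen u hu
    obtain ⟨n, rfl | rfl⟩ := Int.even_or_odd' k
    · exact ⟨n, by group⟩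
    · refine absurd ?_ (notMem_actionKernel hpos hgt hgen)
      have := S.actionKernel.mul_mem hker (S.actionKernel.zpow_mem hsq (-n))
      rwa [show ε ^ (2 * n + 1) * (ε ^ 2) ^ (-n) = ε by group] at this
  · rintro ⟨n, rfl⟩
    refine ⟨?_, S.actionKernel.zpow_mem hsq n⟩
    rw [show (ε ^ 2) ^ n = ε ^ (2 * n) by group, toF_zpow]
    exact hpos.zpow _

lemma eq_of_neg_one_pow_mul_pow_mul_sq_zpow_eq {ε : (𝓞 S.F)ˣ} (hgt : 1 < S.ι (S.toF ε))
    {a b a' b' : Fin 2} {n n' : ℤ}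
    (h : (-1) ^ (a : ℕ) * ε ^ (b : ℕ) * (ε ^ 2) ^ n = (-1) ^ (a' : ℕ) * ε ^ (b' : ℕ) * (ε ^ 2) ^ n') :
    a = a' ∧ b = b' ∧ n = n' := by
  rw [mul_assoc, mul_assoc, pow_mul_sq_zpow, pow_mul_sq_zpow] at h
  have := congrArg (fun z : (𝓞 S.F)ˣ => S.ι (S.toF z)) h
  simp only [Units.val_mul, Units.val_pow_eq_pow_val, Units.val_neg, Units.val_one, toF_mul,
    toF_pow, toF_neg, toF_one, toF_zpow, map_mul, map_pow, map_neg, map_one, map_zpow₀] at this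
  obtain ⟨rfl, hk⟩ := eq_and_eq_of_neg_one_pow_mul_zpow_eq hgt this
  exact ⟨rfl, Fin.ext (by omega), by omega⟩

end QS

/-- Let `ε_F⁺ > 1` be the generator of the totally positive
units and `ε_Δ = (ε_F⁺)²`.  Then:
(1) a totally positive unit acts trivially on `A_Δ = 𝔡⁻¹/𝓞 F` iff it is a power
of `ε_Δ`; (2) the units of norm `1` are exactly `±(ε_F⁺)ⁿ`; (3), (4) the quotient
of the norm-one units by `⟨ε_Δ⟩` is `(ℤ/2ℤ)²`, generated by the classes of `−1`
and `ε_F⁺`. -/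
theorem discriminant_kernel_units (S : QS)
    (εp : (𝓞 S.F)ˣ) (hεppos : S.Pos (S.toF ↑εp)) (hεpgt : 1 < S.ι (S.toF ↑εp))
    (hεpgen : ∀ u : (𝓞 S.F)ˣ, S.Pos (S.toF ↑u) → ∃ n : ℤ, u = εp ^ n) :
    (∀ u : (𝓞 S.F)ˣ,
        (S.Pos (S.toF ↑u) ∧ ∀ x : S.F, S.inDual x → S.isInt ((S.toF ↑u - 1) * x))
          ↔ ∃ n : ℤ, u = (εp ^ 2) ^ n) ∧
    (∀ u : (𝓞 S.F)ˣ,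
        S.NmR (S.toF ↑u) = 1 ↔ ∃ n : ℤ, u = εp ^ n ∨ u = -(εp ^ n)) ∧
    (∀ u : (𝓞 S.F)ˣ, S.NmR (S.toF ↑u) = 1 →
        ∃ (a b : Fin 2) (n : ℤ),
          u = (-1 : (𝓞 S.F)ˣ) ^ (a : ℕ) * εp ^ (b : ℕ) * (εp ^ 2) ^ n) ∧
    (∀ (a b a' b' : Fin 2) (n n' : ℤ),
        (-1 : (𝓞 S.F)ˣ) ^ (a : ℕ) * εp ^ (b : ℕ) * (εp ^ 2) ^ n =
          (-1 : (𝓞 S.F)ˣ) ^ (a' : ℕ) * εp ^ (b' : ℕ) * (εp ^ 2) ^ n' →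
        a = a' ∧ b = b' ∧ n = n') := by
  refine ⟨QS.pos_and_mem_actionKernel_iff hεppos hεpgt hεpgen,
    QS.NmR_eq_one_iff_exists_zpow hεppos hεpgen, fun u hu => ?_,
    fun _ _ _ _ _ _ => QS.eq_of_neg_one_pow_mul_pow_mul_sq_zpow_eq hεpgt⟩
  obtain ⟨k, hk | hk⟩ := (QS.NmR_eq_one_iff_exists_zpow hεppos hεpgen u).1 hu <;>
    obtain ⟨b, n, hbn⟩ := exists_fin_two_zpow_eq εp k
  · exact ⟨0, b, n, by simp [hk, hbn]⟩
  · exact ⟨1, b, n, by simp [hk, hbn]⟩
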